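/- For each integer k ≥ 1 define f̃_k(a,b) := 2^{−2k}·[(a+b)^{2k} − (a−b+1)^{2k} − (a−b−1)^{2k}] ∈ ℂ[a,b]. Then there do not exist an integer N ≥ 1, a polynomial φ ∈ ℂ[u_1,…,u_N], and a polynomial g₀ ∈ ℂ[a,b] such that (a+b) = (a+b)·(4a²−1)·(4b²−1)·g₀(a,b) + φ(f̃_1(a,b), …, f̃_N(a,b)) holds identically in a and b. -/
import Mathlib


/-- `f̃_k(a,b) := 2^{-2k} [(a+b)^{2k} - (a-b+1)^{2k} - (a-b-1)^{2k}]`. -/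
noncomputable def ftilde (k : ℕ) (a b : ℂ) : ℂ :=
  ((2 : ℂ) ^ (2 * k))⁻¹ * ((a + b) ^ (2 * k) - (a - b + 1) ^ (2 * k) - (a - b - 1) ^ (2 * k))

lemma ftilde_eq (k : ℕ) : ftilde k (1/2) 0 = ftilde k (-(1/2)) 0 := by
  have hneg : ∀ x : ℂ, (-x) ^ (2 * k) = x ^ (2 * k) := fun x => by
    rw [pow_mul, pow_mul, neg_sq]
  unfold ftilde
  have h1 : ((-(1/2) : ℂ) + 0) = -(1/2 : ℂ) := by ring
  have h2 : ((-(1/2) : ℂ) - 0 - 1) = -(3/2 : ℂ) := by ring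
  have h3 : ((1/2 : ℂ) - 0 - 1) = -(1/2 : ℂ) := by ring
  have h4 : ((-(1/2) : ℂ) - 0 + 1) = (1/2 : ℂ) := by ring
  have h5 : ((1/2 : ℂ) + 0) = (1/2 : ℂ) := by ring
  have h6 : ((1/2 : ℂ) - 0 + 1) = (3/2 : ℂ) := by ring
  rw [h1, h2, h3, h4, h5, h6, hneg, hneg]
  ring

/-- There are no polynomials `φ ∈ ℂ[u_1,…,u_N]` and `g₀ ∈ ℂ[a,b]` with
`a + b = (a+b)(4a²-1)(4b²-1) g₀(a,b) + φ(f̃_1(a,b), …, f̃_N(a,b))` identically. -/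
theorem no_polynomial_identity :
    ¬ ∃ (N : ℕ) (_ : 1 ≤ N) (φ : MvPolynomial (Fin N) ℂ) (g₀ : MvPolynomial (Fin 2) ℂ),
      ∀ a b : ℂ,
        a + b = (a + b) * (4 * a ^ 2 - 1) * (4 * b ^ 2 - 1) * MvPolynomial.eval ![a, b] g₀ +
          MvPolynomial.eval (fun i : Fin N => ftilde ((i : ℕ) + 1) a b) φ := by
  rintro ⟨N, -, φ, g₀, h⟩
  have h1 := h (1/2) 0
  have h2 := h (-(1/2)) 0
  have hfun : (fun i : Fin N => ftilde ((i : ℕ) + 1) (1/2) 0) =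
      (fun i : Fin N => ftilde ((i : ℕ) + 1) (-(1/2)) 0) := by
    funext i; exact ftilde_eq _
  rw [hfun] at h1
  have hz1 : ((1/2 : ℂ) + 0) * (4 * (1/2 : ℂ) ^ 2 - 1) * (4 * (0:ℂ) ^ 2 - 1) = 0 := by ring
  have hz2 : ((-(1/2) : ℂ) + 0) * (4 * (-(1/2) : ℂ) ^ 2 - 1) * (4 * (0:ℂ) ^ 2 - 1) = 0 := by
    ring
  rw [hz1, zero_mul, zero_add] at h1
  rw [hz2, zero_mul, zero_add] at h2
  have : (1/2 : ℂ) + 0 = -(1/2) + 0 := h1.trans h2.symm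
  norm_num at this
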